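/- Let K = ℚ(√69), ε = (25+3√69)/2, 𝔭 = (23, √69), and for each integer r ≥ 1 set R_r = −5 + (19/23)√69 + (5 − (15/23)√69)/(ε^{r+1} + 1) ∈ K. Then v_𝔭(R_r − 2) ≥ 1 if and only if r ≡ 10 (mod 23), and in that case one even has v_𝔭(R_r − 2) ≥ 2. -/

import Mathlib

open scoped Classical

open NumberField IsDedekindDomain

/-- The exponent `v_𝔭(α)` of the prime `v` in the factorization of the fractional
ideal `α·𝓞 K`, for `α ≠ 0`; by convention `adicVal v 0 = 0`. -/
noncomputable def adicVal {K : Type*} [Field K] [NumberField K]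
    (v : HeightOneSpectrum (𝓞 K)) (α : K) : ℤ :=
  if h : α = 0 then 0
  else -Multiplicative.toAdd (WithZero.unzero ((Valuation.ne_zero_iff (v.valuation K)).mpr h))

/-- The weighted norm `f_{𝔭,c}(α) = |N(α)| · (c/N𝔭)^{v_𝔭(α)}`, with `f_{𝔭,c}(0) = 0`. -/
noncomputable def weightedNorm {K : Type*} [Field K] [NumberField K]
    (v : HeightOneSpectrum (𝓞 K)) (c : ℝ) (α : K) : ℝ :=
  if α = 0 then 0
  else |(Algebra.norm ℚ α : ℚ)| * (c / (Ideal.absNorm v.asIdeal : ℝ)) ^ (adicVal v α)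

/-- `f` is a Euclidean function on `𝓞 K`. -/
def IsEuclideanFunction {K : Type*} [Field K] [NumberField K] (f : K → ℝ) : Prop :=
  ∀ a b : 𝓞 K, b ≠ 0 → ∃ q : 𝓞 K, f ((a : K) - b * q) < f (b : K)

/-- The point \`R_r = −5 + (19/23)√69 + (5 − (15/23)√69)/(ε^{r+1} + 1) ∈ K\`,
where \`ε = (25+3√69)/2\`. -/
noncomputable def Rpt {K : Type*} [Field K] (θ : K) (r : ℕ) : K :=
  -5 + (19 / 23) * θ + (5 - (15 / 23) * θ) / (((25 + 3 * θ) / 2) ^ (r + 1) + 1)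

/-!
Put `π = (23 + 3√69)/2`, so that `π² = 23(1 + π)`, `ε = 1 + π` and `𝔭 = (π)`; `24 - π = ε⁻¹` is a
unit and `23 = π²(24 - π)`. With `n = r + 1`, `R_r - 2 = a_n / (69(εⁿ + 1))` where
`a_n = rptNumerator π n = (38π - 920)εⁿ + 8π - 230`, and the denominator has valuation exactly `2`
because `εⁿ + 1 ≡ 2 (mod π)`. Expanding `(1 + π)ⁿ` to third order and reducing with
`π² = 23(1 + π)` gives
`a_n ≡ 23(38n - 50) + 23π(2 - 2n + 38·C(n,2)) (mod 529)`, and `529 = π⁴ · unit`.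
Hence `π³ ∣ a_n` iff `23 ∣ 38n - 50`, i.e. `n ≡ 11 (mod 23)`; in that case both brackets are
divisible by `23`, so `π⁴ ∣ a_n`. Finally `a_n ≠ 0`, since otherwise `εⁿ + ε⁻ⁿ = -47/11` would be
an algebraic integer.
-/

section adicVal

variable {K : Type*} [Field K] [NumberField K] (v : HeightOneSpectrum (𝓞 K))

theorem adicVal_eq_neg_log (α : K) : adicVal v α = -WithZero.log (v.valuation K α) := by
  unfold adicVal
  split_ifs with h
  · simp [h]
  · rw [WithZero.toAdd_unzero_eq_log]

theorem adicVal_div {α β : K} (hα : α ≠ 0) (hβ : β ≠ 0) :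
    adicVal v (α / β) = adicVal v α - adicVal v β := by
  simp only [adicVal_eq_neg_log, map_div₀]
  rw [WithZero.log_div (by simpa using hα) (by simpa using hβ)]
  ring

theorem adicVal_coe_pow_mul {π c : 𝓞 K} (hv : v.asIdeal = Ideal.span {π}) (hπ : π ≠ 0)
    (hc : ¬π ∣ c) (k : ℕ) : adicVal v ((π ^ k * c : 𝓞 K) : K) = k := by
  have hc' : c ∉ v.asIdeal := by rwa [hv, Ideal.mem_span_singleton]
  rw [adicVal_eq_neg_log, RingOfIntegers.coe_eq_algebraMap,
    HeightOneSpectrum.valuation_of_algebraMap, map_mul, map_pow, v.intValuation_singleton hπ hv,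
    HeightOneSpectrum.intValuation_eq_one_iff.mpr hc', mul_one, ← WithZero.exp_nsmul,
    WithZero.log_exp]
  simp

theorem natCast_le_adicVal_coe_iff_dvd {π x : 𝓞 K} (hv : v.asIdeal = Ideal.span {π})
    (hx : x ≠ 0) (n : ℕ) : (n : ℤ) ≤ adicVal v (x : K) ↔ π ^ n ∣ x := by
  rw [← Ideal.mem_span_singleton, ← Ideal.span_singleton_pow, ← hv,
    ← HeightOneSpectrum.intValuation_le_pow_iff_mem, adicVal_eq_neg_log,
    RingOfIntegers.coe_eq_algebraMap, HeightOneSpectrum.valuation_of_algebraMap,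
    ← WithZero.exp_log (v.intValuation_ne_zero x hx), WithZero.exp_le_exp, WithZero.log_exp]
  omega

end adicVal

theorem pow_four_dvd_one_add_pow_sub {R : Type*} [CommRing R] (x : R) (n : ℕ) :
    x ^ 4 ∣ (1 + x) ^ n - (1 + n * x + n.choose 2 * x ^ 2 + n.choose 3 * x ^ 3) := by
  induction n with
  | zero => simp
  | succ n ih =>
    obtain ⟨z, hz⟩ := ih
    refine ⟨(1 + x) * z + n.choose 3, ?_⟩
    push_cast [Nat.choose_succ_succ', Nat.choose_one_right, pow_succ]
    linear_combination (1 + x) * hz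

theorem dvd_intCast_iff_of_dvd_prime {R : Type*} [CommRing R] {π : R} {p : ℕ} (hp : p.Prime)
    (hπp : π ∣ (p : R)) (hπ : ¬IsUnit π) (m : ℤ) : π ∣ (m : R) ↔ (p : ℤ) ∣ m := by
  refine ⟨fun hm => ?_, fun hm => hπp.trans (by exact_mod_cast Int.cast_dvd_cast _ _ hm)⟩
  by_contra hpm
  have hcop := ((Nat.prime_iff_prime_int.mp hp).coprime_iff_not_dvd.mpr hpm).map
    (Int.castRingHom R)
  exact hπ (hcop.isUnit_of_dvd' (by simpa using hπp) (by simpa using hm))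

def rptNumerator {R : Type*} [CommRing R] (π : R) (n : ℕ) : R :=
  (38 * π - 920) * (1 + π) ^ n + 8 * π - 230

section

variable {R : Type*} [CommRing R] {π : R}

theorem one_add_mul_twentyFour_sub_eq_one (hπ : π ^ 2 = 23 * (1 + π)) :
    (1 + π) * (24 - π) = 1 := by
  linear_combination -hπ

theorem twentyThree_eq_sq_mul (hπ : π ^ 2 = 23 * (1 + π)) : (23 : R) = π ^ 2 * (24 - π) := by
  linear_combination (π - 24) * hπ - 23 * one_add_mul_twentyFour_sub_eq_one hπ

theorem dvd_intCast_iff_twentyThree_dvd (hπ : π ^ 2 = 23 * (1 + π)) (hπu : ¬IsUnit π) (m : ℤ) :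
    π ∣ (m : R) ↔ 23 ∣ m :=
  dvd_intCast_iff_of_dvd_prime (p := 23) (by norm_num)
    ⟨π * (24 - π), by push_cast; linear_combination twentyThree_eq_sq_mul hπ⟩ hπu m

theorem not_dvd_three_mul_twentyFour_sub_mul (hπ : π ^ 2 = 23 * (1 + π)) (hπu : ¬IsUnit π)
    (n : ℕ) : ¬π ∣ 3 * (24 - π) * ((1 + π) ^ n + 1) := by
  intro h
  obtain ⟨d, hd⟩ := sub_dvd_pow_sub_pow (1 + π) 1 n
  have h144 : π ∣ ((144 : ℤ) : R) := by
    rw [← dvd_sub_left h]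
    exact ⟨6 - 3 * (24 - π) * d, by push_cast; linear_combination -3 * (24 - π) * hd⟩
  rw [dvd_intCast_iff_twentyThree_dvd hπ hπu] at h144
  omega

theorem rptNumerator_sub_dvd (hπ : π ^ 2 = 23 * (1 + π)) (n : ℕ) :
    (529 : R) ∣ rptNumerator π n - 23 * ((38 * n - 50 : ℤ) : R)
      - 23 * π * ((2 - 2 * n + 38 * n.choose 2 : ℤ) : R) := by
  obtain ⟨z, hz⟩ := pow_four_dvd_one_add_pow_sub π n
  have h3 : π ^ 3 = 529 + 552 * π := by linear_combination (π + 23) * hπ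
  have h4 : π ^ 4 = 529 * (24 + 25 * π) := by linear_combination (π ^ 2 + 23 * π + 552) * hπ
  set c2 : R := (n.choose 2 : R)
  set c3 : R := (n.choose 3 : R)
  refine ⟨-2 * c2 - 8 * c3 - (2 * c2 + 10 * c3) * π + (38 * π - 920) * (24 + 25 * π) * z, ?_⟩
  unfold rptNumerator
  push_cast
  linear_combination (38 * π - 920) * hz + (38 * n - 920 * c2) * hπ + (38 * c2 - 920 * c3) * h3
    + (38 * c3 + (38 * π - 920) * z) * h4

theorem pi_pow_three_dvd_rptNumerator_iff [IsDomain R] [CharZero R]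
    (hπ : π ^ 2 = 23 * (1 + π)) (hπu : ¬IsUnit π) (n : ℕ) :
    π ^ 3 ∣ rptNumerator π n ↔ n % 23 = 11 := by
  have hπ0 : π ≠ 0 := by rintro rfl; norm_num at hπ
  have h23 := twentyThree_eq_sq_mul hπ
  have hu : IsUnit (24 - π) := .of_mul_eq_one_right _ (one_add_mul_twentyFour_sub_eq_one hπ)
  have hrest : π ^ 3 ∣ rptNumerator π n - 23 * ((38 * n - 50 : ℤ) : R) := by
    obtain ⟨c, hc⟩ := rptNumerator_sub_dvd hπ n
    set m : R := ((2 - 2 * n + 38 * n.choose 2 : ℤ) : R)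
    refine ⟨(24 - π) * m + π * (24 - π) ^ 2 * c, ?_⟩
    linear_combination hc + (π * m + (23 + π ^ 2 * (24 - π)) * c) * h23
  rw [dvd_iff_dvd_of_dvd_sub hrest, h23, pow_succ, mul_assoc,
    mul_dvd_mul_iff_left (pow_ne_zero 2 hπ0), hu.dvd_mul_left,
    dvd_intCast_iff_twentyThree_dvd hπ hπu]
  omega

theorem pi_pow_four_dvd_rptNumerator (hπ : π ^ 2 = 23 * (1 + π)) {n : ℕ} (hn : n % 23 = 11) :
    π ^ 4 ∣ rptNumerator π n := by
  have h529 : π ^ 4 ∣ (529 : R) :=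
    ⟨(24 - π) ^ 2, by linear_combination (23 + π ^ 2 * (24 - π)) * twentyThree_eq_sq_mul hπ⟩
  refine h529.trans ?_
  obtain ⟨k, rfl⟩ : ∃ k, n = 23 * k + 11 := ⟨n / 23, by omega⟩
  obtain ⟨a, ha⟩ : (23 : ℤ) ∣ 38 * ((23 * k + 11 : ℕ) : ℤ) - 50 :=
    ⟨38 * k + 16, by push_cast; ring⟩
  obtain ⟨b, hb⟩ :
      (23 : ℤ) ∣ 2 - 2 * ((23 * k + 11 : ℕ) : ℤ) + 38 * ((23 * k + 11).choose 2 : ℕ) := by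
    have h := Nat.add_one_mul_choose_eq (23 * k + 10) 1
    rw [Nat.choose_one_right] at h
    have h2 : ((23 * k + 11).choose 2 : ℤ) * 2 = (23 * k + 11) * (23 * k + 10) := by
      exact_mod_cast h.symm
    replace h2 : ((23 * k + 11).choose 2 : ℤ) * 2 = 529 * (k * k) + 483 * k + 110 := by
      linear_combination h2
    generalize (k : ℤ) * k = t at h2
    omega
  obtain ⟨c, hc⟩ := rptNumerator_sub_dvd hπ (23 * k + 11)
  rw [ha, hb] at hc
  exact ⟨c + a + π * b, by push_cast at hc; linear_combination hc⟩

theorem eleven_mul_add_eq_of_rptNumerator_eq_zero [IsDomain R] [CharZero R]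
    (hπ : π ^ 2 = 23 * (1 + π)) {n : ℕ} (h : rptNumerator π n = 0) :
    11 * ((1 + π) ^ n + (24 - π) ^ n) = -47 := by
  have hEE : (1 + π) ^ n * (24 - π) ^ n = 1 := by
    rw [← mul_pow, one_add_mul_twentyFour_sub_eq_one hπ, one_pow]
  unfold rptNumerator at h
  set E := (1 + π) ^ n
  set E' := (24 - π) ^ n
  refine eq_neg_of_add_eq_zero_left
    ((mul_eq_zero.mp ?_).resolve_left (by norm_num : (27324 : R) ≠ 0))
  -- `27324 = 3 · 9108`, where `9108` is the norm of both `38π - 920` and `8π - 230`.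
  linear_combination (33 * (-46 - 38 * π) - 33 * (46 + 8 * π) * E') * h
    + 33 * (46 + 8 * π) * (38 * π - 920) * hEE
    + (190 * (-46 - 38 * π) + 1444 * (33 * E + 13 + 5 * π) + 40 * (46 + 8 * π)
      + 64 * (33 * E' + 128 - 5 * π)) * hπ

end

section

variable {K : Type*} [Field K] [NumberField K]

theorem NumberField.RingOfIntegers.intCast_dvd_intCast_iff {m k : ℤ} :
    (m : 𝓞 K) ∣ (k : 𝓞 K) ↔ m ∣ k := by
  refine ⟨fun h => ?_, Int.cast_dvd_cast m k⟩
  have := map_dvd (Algebra.norm ℤ) h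
  simp only [← eq_intCast (algebraMap ℤ (𝓞 K)), Algebra.norm_algebraMap] at this
  exact (Int.pow_dvd_pow_iff Module.finrank_pos.ne').mp this

theorem rptNumerator_ne_zero {π : 𝓞 K} (hπ : π ^ 2 = 23 * (1 + π)) (n : ℕ) :
    rptNumerator π n ≠ 0 := fun h => by
  have h11 : ((11 : ℤ) : 𝓞 K) ∣ ((-47 : ℤ) : 𝓞 K) := ⟨(1 + π) ^ n + (24 - π) ^ n, by
    push_cast
    exact (eleven_mul_add_eq_of_rptNumerator_eq_zero hπ h).symm⟩
  rw [RingOfIntegers.intCast_dvd_intCast_iff] at h11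
  omega

theorem adicVal_sixtyNine_mul_one_add_pow_add_one (v : HeightOneSpectrum (𝓞 K)) {π : 𝓞 K}
    (hπ : π ^ 2 = 23 * (1 + π)) (hv : v.asIdeal = Ideal.span {π}) (hπu : ¬IsUnit π) (n : ℕ) :
    adicVal v ((69 * ((1 + π) ^ n + 1) : 𝓞 K) : K) = 2 := by
  have hπ0 : π ≠ 0 := by rintro rfl; norm_num at hπ
  rw [show (69 * ((1 + π) ^ n + 1) : 𝓞 K) = π ^ 2 * (3 * (24 - π) * ((1 + π) ^ n + 1)) by
    linear_combination 3 * ((1 + π) ^ n + 1) * twentyThree_eq_sq_mul hπ]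
  exact adicVal_coe_pow_mul v hv hπ0 (not_dvd_three_mul_twentyFour_sub_mul hπ hπu n) 2

theorem exists_coe_eq_of_sq_eq_sixtyNine {θ : K} (hθ : θ ^ 2 = 69) :
    ∃ π : 𝓞 K, (π : K) = (23 + 3 * θ) / 2 := by
  refine ⟨⟨(23 + 3 * θ) / 2, Polynomial.X ^ 2 - Polynomial.C 23 * Polynomial.X - Polynomial.C 23,
    by monicity!, ?_⟩, rfl⟩
  simp only [algebraMap_int_eq, eq_intCast, Int.cast_ofNat, Polynomial.eval₂_sub,
    Polynomial.eval₂_X_pow, Polynomial.eval₂_mul, Polynomial.eval₂_ofNat, Polynomial.eval₂_X]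
  linear_combination 9 / 4 * hθ

variable {θ : K} {π : 𝓞 K}

theorem sq_eq_of_coe_eq (hπ : (π : K) = (23 + 3 * θ) / 2) (hθ : θ ^ 2 = 69) :
    π ^ 2 = 23 * (1 + π) := by
  ext
  push_cast [hπ, map_ofNat]
  linear_combination 9 / 4 * hθ

theorem span_pair_eq_span_singleton (hπ : (π : K) = (23 + 3 * θ) / 2) (hθ : θ ^ 2 = 69)
    {ω : 𝓞 K} (hω : (ω : K) = θ) :
    Ideal.span {23, ω} = Ideal.span {π} := by
  have hπ2 := sq_eq_of_coe_eq hπ hθ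
  have hπω : 2 * π = 23 + 3 * ω := by ext; push_cast [hπ, hω, map_ofNat]; ring
  have h23 : (23 : 𝓞 K) = π * (π * (24 - π)) := by linear_combination (π - 1) * hπ2
  apply le_antisymm
  · rw [Ideal.span_le, Set.insert_subset_iff, Set.singleton_subset_iff, SetLike.mem_coe,
      SetLike.mem_coe, Ideal.mem_span_singleton, Ideal.mem_span_singleton]
    exact ⟨⟨_, h23⟩, ⟨23 * π * (24 - π) * ω - 176 * (25 - π),
      by linear_combination 23 * ω * h23 - 176 * hπ2 + 176 * hπω⟩⟩
  · rw [Ideal.span_le, Set.singleton_subset_iff, SetLike.mem_coe, Ideal.mem_span_pair]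
    exact ⟨12 - π, 36, by linear_combination -12 * hπω⟩

theorem Rpt_sub_two_eq (hπ : (π : K) = (23 + 3 * θ) / 2) {r : ℕ} (hr : (1 + π) ^ (r + 1) + 1 ≠ 0) :
    Rpt θ r - 2
      = ((rptNumerator π (r + 1) : 𝓞 K) : K) / ((69 * ((1 + π) ^ (r + 1) + 1) : 𝓞 K) : K) := by
  have hθ : θ = (2 * π - 23) / 3 := by rw [hπ]; ring
  have hε : (25 + 3 * θ) / 2 = 1 + (π : K) := by rw [hπ]; ring
  have hr' : (1 + (π : K)) ^ (r + 1) + 1 ≠ 0 := by exact_mod_cast hr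
  rw [Rpt, hε, rptNumerator, hθ]
  push_cast [map_ofNat]
  field_simp
  ring

end

theorem Rr_divisibility_sqrt69_general {K : Type*} [Field K] [NumberField K]
    (θ : K) (hθ : θ ^ 2 = 69)
    (ω : 𝓞 K) (hω : (ω : K) = θ)
    (hP : (Ideal.span {23, ω} : Ideal (𝓞 K)).IsPrime)
    (h0 : (Ideal.span {23, ω} : Ideal (𝓞 K)) ≠ ⊥)
    (r : ℕ) :
    (1 ≤ adicVal ⟨Ideal.span {23, ω}, hP, h0⟩ (Rpt θ r - 2) ↔ r % 23 = 10) ∧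
    (r % 23 = 10 → 2 ≤ adicVal ⟨Ideal.span {23, ω}, hP, h0⟩ (Rpt θ r - 2)) := by
  obtain ⟨π, hπθ⟩ := exists_coe_eq_of_sq_eq_sixtyNine hθ
  have hπ := sq_eq_of_coe_eq hπθ hθ
  have hv := span_pair_eq_span_singleton hπθ hθ hω
  have hπu : ¬IsUnit π := fun h => hP.ne_top (hv ▸ Ideal.span_singleton_eq_top.mpr h)
  have hE : (1 + π) ^ (r + 1) + 1 ≠ 0 := fun h =>
    not_dvd_three_mul_twentyFour_sub_mul hπ hπu (r + 1) (by simp [h])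
  have ha := rptNumerator_ne_zero hπ (r + 1)
  have hval : adicVal ⟨_, hP, h0⟩ (Rpt θ r - 2)
      = adicVal ⟨_, hP, h0⟩ ((rptNumerator π (r + 1) : 𝓞 K) : K) - 2 := by
    rw [Rpt_sub_two_eq hπθ hE, adicVal_div _ (by exact_mod_cast ha)
      (by exact_mod_cast mul_ne_zero (by norm_num) hE),
      adicVal_sixtyNine_mul_one_add_pow_add_one _ hπ hv hπu]
  have h3 := (natCast_le_adicVal_coe_iff_dvd ⟨_, hP, h0⟩ hv ha 3).trans
    (pi_pow_three_dvd_rptNumerator_iff hπ hπu (r + 1))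
  have h4 := (natCast_le_adicVal_coe_iff_dvd ⟨_, hP, h0⟩ hv ha 4).mpr ∘
    pi_pow_four_dvd_rptNumerator hπ (n := r + 1)
  rw [hval]
  push_cast at h3 h4
  omega

/-- For `K = ℚ(√69)`, `𝔭 = (23, √69)` and `r ≥ 1`:  the numerator of `R_r − 2` is
divisible by `𝔭` if and only if `r ≡ 10 (mod 23)`, and in that case it is even
divisible by `𝔭²`. -/
theorem Rr_divisibility_sqrt69 {K : Type*} [Field K] [NumberField K]
    (θ : K) (hθ : θ ^ 2 = 69) (hdeg : Module.finrank ℚ K = 2)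
    (ω : 𝓞 K) (hω : (ω : K) = θ)
    (hP : (Ideal.span {23, ω} : Ideal (𝓞 K)).IsPrime)
    (h0 : (Ideal.span {23, ω} : Ideal (𝓞 K)) ≠ ⊥)
    (r : ℕ) (hr : 1 ≤ r) :
    (1 ≤ adicVal ⟨Ideal.span {23, ω}, hP, h0⟩ (Rpt θ r - 2) ↔ r % 23 = 10) ∧
    (r % 23 = 10 → 2 ≤ adicVal ⟨Ideal.span {23, ω}, hP, h0⟩ (Rpt θ r - 2)) :=
  Rr_divisibility_sqrt69_general θ hθ ω hω hP h0 r
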